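/- Soundness of disjunction elimination at the level of valid consequence: if Γ ⊩ (φ∨ψ)^x, Γ, φ^x ⊩ χ^y, and Γ, ψ^x ⊩ χ^y all hold (validly, i.e., in every base), then Γ ⊩ χ^y. The proof goes by induction on the structure of χ, including the modal cases χ = □α and χ = ◇α. -/
import Mathlib


/-- Labels -/
abbrev Lbl := ℕ
/-- Propositional atoms -/
abbrev Atm := ℕ

/-- A basic sentence: a labelled atom `p^x` or a relational assumption `xRy`. -/
inductive BSent where
  | atom : Atm → Lbl → BSent
  | rel : Lbl → Lbl → BSent
deriving DecidableEq

/-- A basic sequent `(P ⇒ p)`. -/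
abbrev BSeq := List BSent × BSent

/-- A basic rule `((P₁ ⇒ p₁, …, Pₙ ⇒ pₙ) ⇒ r)`. -/
abbrev BRule := List BSeq × BSent

/-- A base is a set of basic rules. -/
abbrev Base := Set BRule

/-- Basic derivability `S ⊢_B p`, generated by (Ref) and (App). -/
inductive Der (B : Base) : Set BSent → BSent → Prop where
  | ref {S : Set BSent} {s : BSent} : s ∈ S → Der B S s
  | app {S : Set BSent} {r : BSent} {Ps : List BSeq} :
      (Ps, r) ∈ B →
      (∀ q ∈ Ps, Der B (S ∪ {a | a ∈ q.1}) q.2) →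
      Der B S r
/-- Frame conditions. -/
inductive FrameCond where
  | d | t | b | four | five | two
deriving DecidableEq

/-- Labels occurring in a basic sentence. -/
def BSent.labels : BSent → Set Lbl
  | .atom _ x => {x}
  | .rel x y => {x, y}

/-- Basic derivability `S ⊢_B^γ p` with the modal cases for the frame conditions γ. -/
inductive DerM (γ : Set FrameCond) (B : Base) : Set BSent → BSent → Prop where
  | ref {S : Set BSent} {s : BSent} : s ∈ S → DerM γ B S s
  | app {S : Set BSent} {r : BSent} {Ps : List BSeq} :
      (Ps, r) ∈ B →
      (∀ q ∈ Ps, DerM γ B (S ∪ {a | a ∈ q.1}) q.2) →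
      DerM γ B S r
  | dCase {S : Set BSent} {x y : Lbl} {p : Atm} {z : Lbl} : FrameCond.d ∈ γ →
      (∀ s ∈ S, y ∉ s.labels) → y ≠ x → y ≠ z →
      DerM γ B (insert (.rel x y) S) (.atom p z) → DerM γ B S (.atom p z)
  | tCase {S : Set BSent} {x : Lbl} {p : Atm} {y : Lbl} : FrameCond.t ∈ γ →
      DerM γ B (insert (.rel x x) S) (.atom p y) → DerM γ B S (.atom p y)
  | bCase {S : Set BSent} {x y : Lbl} {p : Atm} {z : Lbl} : FrameCond.b ∈ γ →
      DerM γ B S (.rel x y) →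
      DerM γ B (insert (.rel y x) S) (.atom p z) → DerM γ B S (.atom p z)
  | fourCase {S : Set BSent} {x y z : Lbl} {p : Atm} {w : Lbl} : FrameCond.four ∈ γ →
      DerM γ B S (.rel x y) → DerM γ B S (.rel y z) →
      DerM γ B (insert (.rel x z) S) (.atom p w) → DerM γ B S (.atom p w)
  | fiveCase {S : Set BSent} {x y z : Lbl} {p : Atm} {w : Lbl} : FrameCond.five ∈ γ →
      DerM γ B S (.rel x y) → DerM γ B S (.rel x z) →
      DerM γ B (insert (.rel y z) S) (.atom p w) → DerM γ B S (.atom p w)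
  | twoCase {S : Set BSent} {x y z w : Lbl} {p : Atm} {v : Lbl} : FrameCond.two ∈ γ →
      DerM γ B S (.rel x y) → DerM γ B S (.rel x z) →
      (∀ s ∈ S, w ∉ s.labels) → w ≠ x → w ≠ y → w ≠ z → w ≠ v →
      DerM γ B (insert (.rel y w) (insert (.rel z w) S)) (.atom p v) →
      DerM γ B S (.atom p v)

/-- Propositional modal formulae. -/
inductive Formula where
  | atom : Atm → Formula
  | top : Formula
  | bot : Formula
  | and : Formula → Formula → Formula
  | or : Formula → Formula → Formula
  | imp : Formula → Formula → Formula
  | box : Formula → Formula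
  | dia : Formula → Formula
deriving DecidableEq

/-- The support relation `⊩_B^γ φ^x` of the base-extension semantics. -/
def Spt (γ : Set FrameCond) : Formula → Base → Lbl → Prop
  | .atom p, B, x => DerM γ B ∅ (.atom p x)
  | .top, _, _ => True
  | .bot, B, _ => ∀ p z, DerM γ B ∅ (.atom p z)
  | .and φ ψ, B, x => Spt γ φ B x ∧ Spt γ ψ B x
  | .or φ ψ, B, x => ∀ C, B ⊆ C → ∀ (p : Atm) (z : Lbl),
      (∀ D, C ⊆ D → Spt γ φ D x → DerM γ D ∅ (.atom p z)) →
      (∀ D, C ⊆ D → Spt γ ψ D x → DerM γ D ∅ (.atom p z)) →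
      DerM γ C ∅ (.atom p z)
  | .imp φ ψ, B, x => ∀ C, B ⊆ C → Spt γ φ C x → Spt γ ψ C x
  | .box φ, B, x => ∀ (y : Lbl), ∀ C, B ⊆ C → DerM γ C ∅ (.rel x y) → Spt γ φ C y
  | .dia φ, B, x => ∀ C, B ⊆ C → ∀ (p : Atm) (z : Lbl),
      (∀ (y : Lbl), ∀ D, C ⊆ D → DerM γ D ∅ (.rel x y) → Spt γ φ D y →
        DerM γ D ∅ (.atom p z)) →
      DerM γ C ∅ (.atom p z)

/-- Extended formulae: labelled formulae or relational assumptions. -/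
inductive EForm where
  | f : Formula → Lbl → EForm
  | rel : Lbl → Lbl → EForm
deriving DecidableEq

/-- Support for extended formulae. -/
def SupE (γ : Set FrameCond) (B : Base) : EForm → Prop
  | .f φ x => Spt γ φ B x
  | .rel x y => DerM γ B ∅ (.rel x y)

/-- Support for extended sequents `Γ ⊩_B^γ e`: the (Inf) clause. -/
def SupSeq (γ : Set FrameCond) (B : Base) (Γ : Set EForm) (e : EForm) : Prop :=
  (Γ = ∅ → SupE γ B e) ∧
  (Γ ≠ ∅ → ∀ C, B ⊆ C → (∀ ψ ∈ Γ, SupE γ C ψ) → SupE γ C e)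

/-- Validity of a sequent: support in every base. -/
def Valid (γ : Set FrameCond) (Γ : Set EForm) (e : EForm) : Prop :=
  ∀ B : Base, SupSeq γ B Γ e

/-- Labels occurring in an extended formula. -/
def EForm.labels : EForm → Set Lbl
  | .f _ x => {x}
  | .rel x y => {x, y}

/-- Simpson's labelled natural deduction system N_□◇(γ). -/
inductive ND (γ : Set FrameCond) : Set EForm → Formula → Lbl → Prop where
  | hyp {Γ φ x} : EForm.f φ x ∈ Γ → ND γ Γ φ x
  | topI {Γ x} : ND γ Γ .top x
  | botE {Γ x φ y} : ND γ Γ .bot x → ND γ Γ φ y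
  | andI {Γ φ ψ x} : ND γ Γ φ x → ND γ Γ ψ x → ND γ Γ (Formula.and φ ψ) x
  | andE1 {Γ φ ψ x} : ND γ Γ (Formula.and φ ψ) x → ND γ Γ φ x
  | andE2 {Γ φ ψ x} : ND γ Γ (Formula.and φ ψ) x → ND γ Γ ψ x
  | orI1 {Γ φ ψ x} : ND γ Γ φ x → ND γ Γ (Formula.or φ ψ) x
  | orI2 {Γ φ ψ x} : ND γ Γ ψ x → ND γ Γ (Formula.or φ ψ) x
  | orE {Γ φ ψ χ x y} : ND γ Γ (Formula.or φ ψ) x → ND γ (insert (.f φ x) Γ) χ y →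
      ND γ (insert (.f ψ x) Γ) χ y → ND γ Γ χ y
  | impI {Γ φ ψ x} : ND γ (insert (.f φ x) Γ) ψ x → ND γ Γ (Formula.imp φ ψ) x
  | impE {Γ φ ψ x} : ND γ Γ (Formula.imp φ ψ) x → ND γ Γ φ x → ND γ Γ ψ x
  | boxI {Γ φ x y} : y ≠ x → (∀ e ∈ Γ, y ∉ e.labels) →
      ND γ (insert (.rel x y) Γ) φ y → ND γ Γ (Formula.box φ) x
  | boxE {Γ φ x y} : ND γ Γ (Formula.box φ) x → EForm.rel x y ∈ Γ → ND γ Γ φ y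
  | diaI {Γ φ x y} : ND γ Γ φ y → EForm.rel x y ∈ Γ → ND γ Γ (Formula.dia φ) x
  | diaE {Γ φ ψ x y z} : ND γ Γ (Formula.dia φ) x → y ≠ x → y ≠ z → (∀ e ∈ Γ, y ∉ e.labels) →
      ND γ (insert (.f φ y) (insert (.rel x y) Γ)) ψ z → ND γ Γ ψ z
  | rD {Γ φ x y z} : FrameCond.d ∈ γ → y ≠ x → y ≠ z → (∀ e ∈ Γ, y ∉ e.labels) →
      ND γ (insert (.rel x y) Γ) φ z → ND γ Γ φ z
  | rT {Γ φ x y} : FrameCond.t ∈ γ → ND γ (insert (.rel x x) Γ) φ y → ND γ Γ φ y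
  | rB {Γ φ x y z} : FrameCond.b ∈ γ → EForm.rel x y ∈ Γ →
      ND γ (insert (.rel y x) Γ) φ z → ND γ Γ φ z
  | r4 {Γ φ x y z w} : FrameCond.four ∈ γ → EForm.rel x y ∈ Γ → EForm.rel y z ∈ Γ →
      ND γ (insert (.rel x z) Γ) φ w → ND γ Γ φ w
  | r5 {Γ φ x y z w} : FrameCond.five ∈ γ → EForm.rel x y ∈ Γ → EForm.rel x z ∈ Γ →
      ND γ (insert (.rel y z) Γ) φ w → ND γ Γ φ w
  | r2 {Γ φ x y z w v} : FrameCond.two ∈ γ → EForm.rel x y ∈ Γ → EForm.rel x z ∈ Γ →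
      w ≠ x → w ≠ y → w ≠ z → w ≠ v → (∀ e ∈ Γ, w ∉ e.labels) →
      ND γ (insert (.rel y w) (insert (.rel z w) Γ)) φ v → ND γ Γ φ v

theorem DerM.mono {γ} {B C : Base} (h : B ⊆ C) {S s} (d : DerM γ B S s) : DerM γ C S s := by
  induction d with
  | ref hs => exact .ref hs
  | app hr _ ih => exact .app (h hr) ih
  | dCase h1 h2 h3 h4 _ ih => exact .dCase h1 h2 h3 h4 ih
  | tCase h1 _ ih => exact .tCase h1 ih
  | bCase h1 _ _ ih1 ih2 => exact .bCase h1 ih1 ih2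
  | fourCase h1 _ _ _ ih1 ih2 ih3 => exact .fourCase h1 ih1 ih2 ih3
  | fiveCase h1 _ _ _ ih1 ih2 ih3 => exact .fiveCase h1 ih1 ih2 ih3
  | twoCase h1 _ _ h2 h3 h4 h5 h6 _ ih1 ih2 ih3 =>
      exact .twoCase h1 ih1 ih2 h2 h3 h4 h5 h6 ih3

theorem Spt.mono {γ} : ∀ (φ : Formula) {B C : Base}, B ⊆ C → ∀ {x}, Spt γ φ B x → Spt γ φ C x
  | .atom _, _, _, h, _, hs => DerM.mono h hs
  | .top, _, _, _, _, _ => trivial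
  | .bot, _, _, h, _, hs => fun p z => DerM.mono h (hs p z)
  | .and φ ψ, _, _, h, _, hs => ⟨Spt.mono φ h hs.1, Spt.mono ψ h hs.2⟩
  | .or _ _, _, _, h, _, hs => fun D hD => hs D (h.trans hD)
  | .imp _ _, _, _, h, _, hs => fun D hD => hs D (h.trans hD)
  | .box _, _, _, h, _, hs => fun z D hD => hs z D (h.trans hD)
  | .dia _, _, _, h, _, hs => fun D hD => hs D (h.trans hD)

theorem SupE.mono {γ} {B C : Base} (h : B ⊆ C) : ∀ {e}, SupE γ B e → SupE γ C e
  | .f φ _, hs => Spt.mono φ h hs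
  | .rel _ _, hs => DerM.mono h hs

theorem or_elim_key (γ : Set FrameCond) (φ ψ : Formula) (x : Lbl) :
    ∀ (χ : Formula) (y : Lbl) (C : Base),
      Spt γ (.or φ ψ) C x →
      (∀ D, C ⊆ D → Spt γ φ D x → Spt γ χ D y) →
      (∀ D, C ⊆ D → Spt γ ψ D x → Spt γ χ D y) →
      Spt γ χ C y := by
  intro χ
  induction χ with
  | atom p =>
    intro y C hor hφ hψ
    exact hor C subset_rfl p y (fun D hD hs => hφ D hD hs) (fun D hD hs => hψ D hD hs)
  | top => intros; trivial
  | bot =>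
    intro y C hor hφ hψ p z
    exact hor C subset_rfl p z (fun D hD hs => hφ D hD hs p z) (fun D hD hs => hψ D hD hs p z)
  | and χ₁ χ₂ ih₁ ih₂ =>
    intro y C hor hφ hψ
    exact ⟨ih₁ y C hor (fun D hD hs => (hφ D hD hs).1) (fun D hD hs => (hψ D hD hs).1),
           ih₂ y C hor (fun D hD hs => (hφ D hD hs).2) (fun D hD hs => (hψ D hD hs).2)⟩
  | or χ₁ χ₂ _ _ =>
    intro y C hor hφ hψ C' hC' p z h₁ h₂
    exact hor C' hC' p z
      (fun D hD hs => hφ D (hC'.trans hD) hs D subset_rfl p z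
        (fun E hE => h₁ E (hD.trans hE)) (fun E hE => h₂ E (hD.trans hE)))
      (fun D hD hs => hψ D (hC'.trans hD) hs D subset_rfl p z
        (fun E hE => h₁ E (hD.trans hE)) (fun E hE => h₂ E (hD.trans hE)))
  | imp χ₁ χ₂ _ ih₂ =>
    intro y C hor hφ hψ C' hC' h₁
    exact ih₂ y C' (Spt.mono _ hC' hor)
      (fun D hD hs => hφ D (hC'.trans hD) hs D subset_rfl (Spt.mono _ hD h₁))
      (fun D hD hs => hψ D (hC'.trans hD) hs D subset_rfl (Spt.mono _ hD h₁))
  | box α ih =>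
    intro y C hor hφ hψ z C' hC' hrel
    exact ih z C' (Spt.mono _ hC' hor)
      (fun D hD hs => hφ D (hC'.trans hD) hs z D subset_rfl (DerM.mono hD hrel))
      (fun D hD hs => hψ D (hC'.trans hD) hs z D subset_rfl (DerM.mono hD hrel))
  | dia α _ =>
    intro y C hor hφ hψ C' hC' p z hcont
    exact hor C' hC' p z
      (fun D hD hs => hφ D (hC'.trans hD) hs D subset_rfl p z
        (fun w E hE => hcont w E (hD.trans hE)))
      (fun D hD hs => hψ D (hC'.trans hD) hs D subset_rfl p z
        (fun w E hE => hcont w E (hD.trans hE)))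

/-- Soundness of disjunction elimination at the level of valid consequence. -/
theorem or_elim_sound (γ : Set FrameCond) (Γ : Set EForm) (φ ψ χ : Formula) (x y : Lbl)
    (h1 : Valid γ Γ (.f (Formula.or φ ψ) x))
    (h2 : Valid γ (insert (.f φ x) Γ) (.f χ y))
    (h3 : Valid γ (insert (.f ψ x) Γ) (.f χ y)) :
    Valid γ Γ (.f χ y) := by
  have hne : ∀ (α : Formula), (insert (EForm.f α x) Γ : Set EForm) ≠ ∅ :=
    fun α => (Set.insert_nonempty _ _).ne_empty
  have hcut : ∀ (α : Formula), Valid γ (insert (.f α x) Γ) (.f χ y) →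
      ∀ D, (∀ e ∈ Γ, SupE γ D e) → Spt γ α D x → Spt γ χ D y := by
    intro α hv D hΓ hα
    refine (hv D).2 (hne α) D subset_rfl ?_
    intro e he
    rcases he with he | he
    · subst he; exact hα
    · exact hΓ e he
  intro B
  constructor
  · intro hΓ
    have hor : Spt γ (.or φ ψ) B x := (h1 B).1 hΓ
    have hΓ' : ∀ (D : Base), ∀ e ∈ Γ, SupE γ D e := by
      intro D e he; rw [hΓ] at he; exact absurd he (Set.notMem_empty e)
    exact or_elim_key γ φ ψ x χ y B hor
      (fun D _ hs => hcut φ h2 D (hΓ' D) hs)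
      (fun D _ hs => hcut ψ h3 D (hΓ' D) hs)
  · intro hΓ C hC hΓC
    have hor : Spt γ (.or φ ψ) C x := (h1 B).2 hΓ C hC hΓC
    exact or_elim_key γ φ ψ x χ y C hor
      (fun D hD hs => hcut φ h2 D (fun e he => SupE.mono hD (hΓC e he)) hs)
      (fun D hD hs => hcut ψ h3 D (fun e he => SupE.mono hD (hΓC e he)) hs)
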